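/- With conditionally fixed positive-sample counts, the zero-trimmed rank statistic W' satisfies W' = w₁ + (n₁'n₀⁺ − n₁⁺n₀')/2 and the untrimmed statistic W satisfies W = w₁ + (n₁n₀⁺ − n₁⁺n₀)/2, where w₁ = s₁ − n₁⁺(n₀⁺+n₁⁺+1)/2 and s₁ is the sum of descending ranks of positive values in sample 1 within the combined trimmed (resp. full) sample, using average ranks for tied zeros. -/
import Mathlib


/-- Algebraic identities relating the zero-trimmed and untrimmed rank statistics.
With `p̂ = max{n₁⁺/n₁, n₀⁺/n₀}`, trimmed sizes `n₁' = n₁ p̂`, `n₀' = n₀ p̂`,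
`s₁` the sum of descending ranks of the positive values of sample 1 (with tied
zeros receiving their average rank, so that
`S' = s₁ + (n₁' − n₁⁺)(n₀'+n₁'+1+n₀⁺+n₁⁺)/2` and
`S = s₁ + (n₁ − n₁⁺)(n₀+n₁+1+n₀⁺+n₁⁺)/2`),
`W' = S' − n₁'(n₀'+n₁'+1)/2`, `W = S − n₁(n₀+n₁+1)/2`, and
`w₁ = s₁ − n₁⁺(n₀⁺+n₁⁺+1)/2`, one has
`W' = w₁ + (n₁' n₀⁺ − n₁⁺ n₀')/2` and `W = w₁ + (n₁ n₀⁺ − n₁⁺ n₀)/2`. -/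
theorem stmt_10 (n1 n0 n1pos n0pos s1 : ℝ) (hn1 : 0 < n1) (hn0 : 0 < n0)
    (phat n1' n0' S' S W' W w1 : ℝ)
    (hphat : phat = max (n1pos / n1) (n0pos / n0))
    (hn1' : n1' = n1 * phat) (hn0' : n0' = n0 * phat)
    (hS' : S' = s1 + (n1' - n1pos) * (n0' + n1' + 1 + n0pos + n1pos) / 2)
    (hS : S = s1 + (n1 - n1pos) * (n0 + n1 + 1 + n0pos + n1pos) / 2)
    (hW' : W' = S' - n1' * (n0' + n1' + 1) / 2)
    (hW : W = S - n1 * (n0 + n1 + 1) / 2)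
    (hw1 : w1 = s1 - n1pos * (n0pos + n1pos + 1) / 2) :
    W' = w1 + (n1' * n0pos - n1pos * n0') / 2 ∧
      W = w1 + (n1 * n0pos - n1pos * n0) / 2 := by
  subst hphat hn1' hn0' hS' hS hW' hW hw1; constructor <;> ring
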